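/- arXiv:math/0511733 — 5 statements merged into one kernel-verified Lean document; each statement's English description precedes it below -/
import Mathlib

section
/- The bracket defined on the vector space with basis {L_{α,i}, c | α ∈ G, i ∈ ℤ, i ≥ -1} by [L_{α,i}, L_{β,j}] = ((i+1)β - (j+1)α) L_{α+β,i+j} + α δ_{α,-β} δ_{i+j,-2} c and [c, L_{α,i}] = 0 satisfies the Jacobi identity, hence defines a Lie algebra structure. -/
/-- Indices `i ∈ ℤ`, `i ≥ -1`. -/
abbrev BIdx : Type := {i : ℤ // -1 ≤ i}

/-- The underlying vector space of the Block type Lie algebra `B(G)`: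
the free `F`-vector space on the basis `{L_{α,i} | α ∈ G, i ≥ -1} ∪ {c}`. -/
abbrev BlockCarrier (F : Type*) [Field F] (G : AddSubgroup F) : Type _ :=
  ((G × BIdx) ⊕ Unit) →₀ F

variable (F : Type*) [Field F] (G : AddSubgroup F)

/-- The basis vector `L_{α,i}`. -/
noncomputable def Lgen (α : G) (i : BIdx) : BlockCarrier F G :=
  Finsupp.single (Sum.inl (α, i)) 1

/-- The central basis vector `c`. -/
noncomputable def cgen : BlockCarrier F G :=
  Finsupp.single (Sum.inr ()) 1

open scoped Classical in
/-- The bracket on basis vectors: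
`[L_{α,i}, L_{β,j}] = ((i+1)β - (j+1)α) L_{α+β,i+j} + α δ_{α,-β} δ_{i+j,-2} c`
(with `L_{α+β,i+j}` interpreted as `0` when `i+j < -1`), and `c` central. -/
noncomputable def basisBracket : ((G × BIdx) ⊕ Unit) → ((G × BIdx) ⊕ Unit) → BlockCarrier F G
  | Sum.inl (α, i), Sum.inl (β, j) =>
      (if h : (-1 : ℤ) ≤ i.1 + j.1 then
          ((((i.1 : F) + 1) * (β : F)) - (((j.1 : F) + 1) * (α : F))) •
            Lgen F G (α + β) ⟨i.1 + j.1, h⟩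
        else 0)
      + (if α = -β ∧ i.1 + j.1 = -2 then (α : F) • cgen F G else 0)
  | _, _ => 0

/-- The bracket on `B(G)`, extended bilinearly from the basis. -/
noncomputable def blockBracket (x y : BlockCarrier F G) : BlockCarrier F G :=
  x.sum fun a xa => y.sum fun b yb => (xa * yb) • basisBracket F G a b

noncomputable def Bl : BlockCarrier F G →ₗ[F] BlockCarrier F G →ₗ[F] BlockCarrier F G :=
  Finsupp.lift _ F _ fun a => Finsupp.lift _ F _ fun b => basisBracket F G a b

lemma blockBracket_eq (x y : BlockCarrier F G) : blockBracket F G x y = Bl F G x y := by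
  unfold blockBracket Bl
  rw [Finsupp.lift_apply]
  conv_rhs => rw [Finsupp.sum, LinearMap.sum_apply]
  rw [Finsupp.sum]
  refine Finset.sum_congr rfl fun a _ => ?_
  rw [LinearMap.smul_apply, Finsupp.lift_apply, Finsupp.smul_sum]
  refine Finsupp.sum_congr fun b _ => ?_
  rw [smul_smul]

lemma basisBracket_inr_left (u : Unit) (b : (G × BIdx) ⊕ Unit) :
    basisBracket F G (Sum.inr u) b = 0 := rfl

lemma basisBracket_inr_right (a : (G × BIdx) ⊕ Unit) (u : Unit) :
    basisBracket F G a (Sum.inr u) = 0 := by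
  cases a with
  | inl p => obtain ⟨α, i⟩ := p; rfl
  | inr v => rfl

lemma Bl_single_single (a b : (G × BIdx) ⊕ Unit) :
    Bl F G (Finsupp.single a 1) (Finsupp.single b 1) = basisBracket F G a b := by
  rw [← blockBracket_eq]
  unfold blockBracket
  rw [Finsupp.sum_single_index (by simp), Finsupp.sum_single_index (by simp)]
  simp

lemma Bl_inr_left (u : Unit) (r : F) (y : BlockCarrier F G) :
    Bl F G (Finsupp.single (Sum.inr u) r) y = 0 := by
  rw [← blockBracket_eq]
  unfold blockBracket
  rw [Finsupp.sum_single_index (by simp)]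
  rw [Finsupp.sum]
  refine Finset.sum_eq_zero fun b _ => ?_
  rw [basisBracket_inr_left, smul_zero]

lemma Bl_inr_right (x : BlockCarrier F G) (u : Unit) (r : F) :
    Bl F G x (Finsupp.single (Sum.inr u) r) = 0 := by
  rw [← blockBracket_eq]
  unfold blockBracket
  rw [Finsupp.sum]
  refine Finset.sum_eq_zero fun a _ => ?_
  rw [Finsupp.sum_single_index (by simp)]
  rw [basisBracket_inr_right, smul_zero]

lemma Lgen_congr (a a' : G) (i i' : BIdx) (ha : a = a') (hi : i.1 = i'.1) :
    Lgen F G a i = Lgen F G a' i' := by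
  subst ha
  obtain ⟨i, hi1⟩ := i
  obtain ⟨i', hi2⟩ := i'
  simp only at hi
  subst hi
  rfl

lemma smul_congr (a b : F) (x y : BlockCarrier F G) (h1 : a = b) (h2 : x = y) :
    a • x = b • y := by rw [h1, h2]

open scoped Classical in
lemma db (α β γ δ : G) (hδ : δ = α + β + γ) (i j k : BIdx) (s : ℤ)
    (hs : s = i.1 + j.1 + k.1) :
    Bl F G (Lgen F G α i) (Bl F G (Lgen F G β j) (Lgen F G γ k)) =
      (if h : (-1 : ℤ) ≤ s then
        (((((j.1 : F) + 1) * (γ : F)) - (((k.1 : F) + 1) * (β : F))) *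
          ((((i.1 : F) + 1) * ((β : F) + (γ : F))) - (((j.1 : F) + (k.1 : F) + 1) * (α : F)))) •
          Lgen F G δ ⟨s, h⟩
      else 0)
      + (if δ = 0 ∧ s = -2 then
          ((((((j.1 : F) + 1) * (γ : F)) - (((k.1 : F) + 1) * (β : F)))) * (α : F)) • cgen F G
        else 0) := by
  subst hδ hs
  rw [show Lgen F G β j = Finsupp.single (Sum.inl (β, j)) 1 from rfl,
      show Lgen F G γ k = Finsupp.single (Sum.inl (γ, k)) 1 from rfl,
      Bl_single_single]
  simp only [basisBracket]
  by_cases hjk : (-1 : ℤ) ≤ j.1 + k.1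
  · rw [dif_pos hjk]
    by_cases hc : β = -γ ∧ j.1 + k.1 = -2
    · exfalso; omega
    · rw [if_neg hc, add_zero, map_smul,
        show Lgen F G α i = Finsupp.single (Sum.inl (α, i)) 1 from rfl,
        show Lgen F G (β + γ) ⟨j.1 + k.1, hjk⟩
          = Finsupp.single (Sum.inl (β + γ, (⟨j.1 + k.1, hjk⟩ : BIdx))) 1 from rfl,
        Bl_single_single]
      simp only [basisBracket]
      by_cases hik : (-1 : ℤ) ≤ i.1 + (j.1 + k.1)
      · rw [dif_pos hik, dif_pos (show (-1 : ℤ) ≤ i.1 + j.1 + k.1 by omega),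
          if_neg (show ¬(α = -(β + γ) ∧ i.1 + (j.1 + k.1) = -2) from fun h => by omega),
          if_neg (show ¬(α + β + γ = 0 ∧ i.1 + j.1 + k.1 = -2) from fun h => by omega),
          add_zero, add_zero, smul_smul]
        refine smul_congr F G _ _ _ _ ?_ ?_
        · push_cast
          ring
        · exact Lgen_congr F G _ _ _ _ (by rw [add_assoc]) (by ring)
      · rw [dif_neg hik, dif_neg (show ¬((-1 : ℤ) ≤ i.1 + j.1 + k.1) by omega), zero_add, zero_add]
        by_cases hcc : α = -(β + γ) ∧ i.1 + (j.1 + k.1) = -2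
        · rw [if_pos hcc,
            if_pos (show α + β + γ = 0 ∧ i.1 + j.1 + k.1 = -2 from
              ⟨by rw [add_assoc, ← eq_neg_iff_add_eq_zero]; exact hcc.1, by omega⟩),
            smul_smul]
        · rw [if_neg hcc,
            if_neg (show ¬(α + β + γ = 0 ∧ i.1 + j.1 + k.1 = -2) from fun h => hcc
              ⟨by rw [eq_neg_iff_add_eq_zero, ← add_assoc]; exact h.1, by omega⟩),
            smul_zero]
  · rw [dif_neg hjk, zero_add]
    have hj : j.1 = -1 := by omega
    have hk : k.1 = -1 := by omega
    have hco : (((j.1 : F) + 1) * (γ : F)) - (((k.1 : F) + 1) * (β : F)) = 0 := by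
      rw [hj, hk]; push_cast; ring
    rw [hco]
    simp only [zero_mul, zero_smul]
    have hrhs : ((if h : (-1 : ℤ) ≤ i.1 + j.1 + k.1 then (0 : BlockCarrier F G) else 0)
        + (if α + β + γ = 0 ∧ i.1 + j.1 + k.1 = -2 then (0 : BlockCarrier F G) else 0)) = 0 := by
      split_ifs <;> simp
    rw [hrhs]
    by_cases hc : β = -γ ∧ j.1 + k.1 = -2
    · rw [if_pos hc, map_smul,
        show Lgen F G α i = Finsupp.single (Sum.inl (α, i)) 1 from rfl,
        show cgen F G = Finsupp.single (Sum.inr ()) 1 from rfl,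
        Bl_single_single, basisBracket_inr_right, smul_zero]
    · rw [if_neg hc, map_zero]

lemma jacobi_gen (α β γ : G) (i j k : BIdx) :
    Bl F G (Lgen F G α i) (Bl F G (Lgen F G β j) (Lgen F G γ k))
      + Bl F G (Lgen F G β j) (Bl F G (Lgen F G γ k) (Lgen F G α i))
      + Bl F G (Lgen F G γ k) (Bl F G (Lgen F G α i) (Lgen F G β j)) = 0 := by
  rw [db F G α β γ (α + β + γ) rfl i j k (i.1 + j.1 + k.1) rfl,
      db F G β γ α (α + β + γ) (by abel) j k i (i.1 + j.1 + k.1) (by ring),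
      db F G γ α β (α + β + γ) (by abel) k i j (i.1 + j.1 + k.1) (by ring)]
  by_cases h : (-1 : ℤ) ≤ i.1 + j.1 + k.1
  · have hneg : ¬(α + β + γ = 0 ∧ i.1 + j.1 + k.1 = -2) := fun hq => by omega
    simp only [dif_pos h, if_neg hneg, add_zero]
    rw [← add_smul, ← add_smul]
    have : ((((j.1 : F) + 1) * (γ : F) - ((k.1 : F) + 1) * (β : F)) *
          (((i.1 : F) + 1) * ((β : F) + (γ : F)) - ((j.1 : F) + (k.1 : F) + 1) * (α : F)))
        + ((((k.1 : F) + 1) * (α : F) - ((i.1 : F) + 1) * (γ : F)) *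
          (((j.1 : F) + 1) * ((γ : F) + (α : F)) - ((k.1 : F) + (i.1 : F) + 1) * (β : F)))
        + ((((i.1 : F) + 1) * (β : F) - ((j.1 : F) + 1) * (α : F)) *
          (((k.1 : F) + 1) * ((α : F) + (β : F)) - ((i.1 : F) + (j.1 : F) + 1) * (γ : F)))
        = 0 := by ring
    rw [this, zero_smul]
  · simp only [dif_neg h, zero_add]
    by_cases hc : α + β + γ = 0 ∧ i.1 + j.1 + k.1 = -2
    · simp only [if_pos hc]
      rw [← add_smul, ← add_smul]
      have : ((((j.1 : F) + 1) * (γ : F) - ((k.1 : F) + 1) * (β : F)) * (α : F))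
          + ((((k.1 : F) + 1) * (α : F) - ((i.1 : F) + 1) * (γ : F)) * (β : F))
          + ((((i.1 : F) + 1) * (β : F) - ((j.1 : F) + 1) * (α : F)) * (γ : F)) = 0 := by ring
      rw [this, zero_smul]
    · simp only [if_neg hc]
      simp

noncomputable def Jac (x y z : BlockCarrier F G) : BlockCarrier F G :=
  Bl F G x (Bl F G y z) + Bl F G y (Bl F G z x) + Bl F G z (Bl F G x y)

lemma Jac_add1 (x x' y z : BlockCarrier F G) :
    Jac F G (x + x') y z = Jac F G x y z + Jac F G x' y z := by
  simp only [Jac, map_add, LinearMap.add_apply]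
  abel

lemma Jac_add2 (x y y' z : BlockCarrier F G) :
    Jac F G x (y + y') z = Jac F G x y z + Jac F G x y' z := by
  simp only [Jac, map_add, LinearMap.add_apply]
  abel

lemma Jac_add3 (x y z z' : BlockCarrier F G) :
    Jac F G x y (z + z') = Jac F G x y z + Jac F G x y z' := by
  simp only [Jac, map_add, LinearMap.add_apply]
  abel

lemma Jac_zero1 (y z : BlockCarrier F G) : Jac F G 0 y z = 0 := by
  simp [Jac]

lemma Jac_zero2 (x z : BlockCarrier F G) : Jac F G x 0 z = 0 := by
  simp [Jac]

lemma Jac_zero3 (x y : BlockCarrier F G) : Jac F G x y 0 = 0 := by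
  simp [Jac]

lemma Jac_smul1 (r : F) (x y z : BlockCarrier F G) :
    Jac F G (r • x) y z = r • Jac F G x y z := by
  simp only [Jac, map_smul, LinearMap.smul_apply, smul_add]

lemma Jac_smul2 (r : F) (x y z : BlockCarrier F G) :
    Jac F G x (r • y) z = r • Jac F G x y z := by
  simp only [Jac, map_smul, LinearMap.smul_apply, smul_add]

lemma Jac_smul3 (r : F) (x y z : BlockCarrier F G) :
    Jac F G x y (r • z) = r • Jac F G x y z := by
  simp only [Jac, map_smul, LinearMap.smul_apply, smul_add]

lemma Jac_single (a b c : (G × BIdx) ⊕ Unit) :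
    Jac F G (Finsupp.single a 1) (Finsupp.single b 1) (Finsupp.single c 1) = 0 := by
  match a, b, c with
  | Sum.inr u, b, c =>
      simp [Jac, Bl_inr_left, Bl_inr_right]
  | a, Sum.inr u, c =>
      simp [Jac, Bl_inr_left, Bl_inr_right]
  | a, b, Sum.inr u =>
      simp [Jac, Bl_inr_left, Bl_inr_right]
  | Sum.inl (α, i), Sum.inl (β, j), Sum.inl (γ, k) =>
      exact jacobi_gen F G α β γ i j k

lemma Jac_eq_zero (x y z : BlockCarrier F G) : Jac F G x y z = 0 := by
  induction x using Finsupp.induction_linear with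
  | zero => exact Jac_zero1 F G y z
  | add f g hf hg => rw [Jac_add1, hf, hg, add_zero]
  | single a r =>
    induction y using Finsupp.induction_linear with
    | zero => exact Jac_zero2 F G _ z
    | add f g hf hg => rw [Jac_add2, hf, hg, add_zero]
    | single b s =>
      induction z using Finsupp.induction_linear with
      | zero => exact Jac_zero3 F G _ _
      | add f g hf hg => rw [Jac_add3, hf, hg, add_zero]
      | single c t =>
        rw [show Finsupp.single a r = r • Finsupp.single a (1 : F) by
              rw [Finsupp.smul_single', mul_one],
            show Finsupp.single b s = s • Finsupp.single b (1 : F) by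
              rw [Finsupp.smul_single', mul_one],
            show Finsupp.single c t = t • Finsupp.single c (1 : F) by
              rw [Finsupp.smul_single', mul_one],
            Jac_smul1, Jac_smul2, Jac_smul3, Jac_single, smul_zero, smul_zero, smul_zero]

/-- The bracket defined by
`[L_{α,i}, L_{β,j}] = ((i+1)β - (j+1)α) L_{α+β,i+j} + α δ_{α,-β} δ_{i+j,-2} c`,
`[c, L_{α,i}] = 0`, satisfies the Jacobi identity (hence defines a Lie algebra
structure on `B(G)`). -/
theorem blockBracket_jacobi [CharZero F] (x y z : BlockCarrier F G) :
    blockBracket F G x (blockBracket F G y z)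
      + blockBracket F G y (blockBracket F G z x)
      + blockBracket F G z (blockBracket F G x y) = 0 := by
  simp only [blockBracket_eq]
  exact Jac_eq_zero F G x y z
end

section
/- The space 𝔽[x, x^{-1}, t] ⊕ 𝔽c with bracket [x^α f(t), x^β g(t)] = x^{α+β}(β f'(t) g(t) - α f(t) g'(t)) + α δ_{α,-β} f(0) g(0) c and c central, is a Lie algebra; moreover, the map sending L_{α,i} ↦ x^α t^{i+1} and c ↦ c is a Lie algebra isomorphism from B(ℤ) onto this Lie algebra. -/
open UniversalEnvelopingAlgebra

variable {F : Type*} [Field F] [CharZero F] {G : AddSubgroup F}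
variable {B : Type*} [LieRing B] [LieAlgebra F B]

open scoped Classical in
/-- The family `L : G → BIdx → B` together with `c : B` satisfies the defining
relations of the Block type Lie algebra `B(G)`:
`[L_{α,i}, L_{β,j}] = ((i+1)β - (j+1)α) L_{α+β,i+j} + α δ_{α,-β} δ_{i+j,-2} c`
(the term `L_{α+β,i+j}` being interpreted as `0` when `i+j < -1`), and
`[c, L_{α,i}] = 0`. -/
def IsBlockAlgebra (L : G → BIdx → B) (c : B) : Prop :=
  (∀ (α β : G) (i j : BIdx),
      ⁅L α i, L β j⁆ =
        (if h : (-1 : ℤ) ≤ i.1 + j.1 then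
            ((((i.1 : F) + 1) * (β : F)) - (((j.1 : F) + 1) * (α : F))) •
              L (α + β) ⟨i.1 + j.1, h⟩
          else 0)
        + (if α = -β ∧ i.1 + j.1 = -2 then (α : F) • c else 0))
  ∧ (∀ (α : G) (i : BIdx), ⁅c, L α i⁆ = 0)

section Defs

variable (F) (L : G → BIdx → B) (c : B)

open scoped Classical in
/-- The homogeneous component `B(G)_α = span{L_{α,i} | i ≥ -1} + δ_{α,0} F c`. -/
noncomputable def blockWt (α : G) : Submodule F B :=
  Submodule.span F (Set.range (L α) ∪ (if α = 0 then {c} else ∅))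

end Defs

open scoped Classical in
/-- The defining relations of the Block type Lie algebra `B(ℤ)` (over `F`). -/
def IsBlockAlgebraZ {B' : Type*} [LieRing B'] [LieAlgebra F B']
    (L : ℤ → BIdx → B') (c : B') : Prop :=
  (∀ (α β : ℤ) (i j : BIdx),
      ⁅L α i, L β j⁆ =
        (if h : (-1 : ℤ) ≤ i.1 + j.1 then
            ((((i.1 : F) + 1) * (β : F)) - (((j.1 : F) + 1) * (α : F))) •
              L (α + β) ⟨i.1 + j.1, h⟩
          else 0)
        + (if α = -β ∧ i.1 + j.1 = -2 then (α : F) • c else 0))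
  ∧ (∀ (α : ℤ) (i : BIdx), ⁅c, L α i⁆ = 0)

/-- The space `F[x, x⁻¹, t] ⊕ F c`: an element is a finitely supported family
`(f_α)_{α ∈ ℤ}` of polynomials in `t` (the coefficient of `x^α`) together with a
scalar (the coefficient of `c`). -/
abbrev BlockLoop (F : Type*) [Field F] : Type _ := (ℤ →₀ Polynomial F) × F

section Loop

variable (F)

/-- The element `x^α f(t)` of `F[x, x⁻¹, t] ⊕ F c`. -/
noncomputable def loopMono (α : ℤ) (f : Polynomial F) : BlockLoop F :=
  (Finsupp.single α f, 0)

/-- The central element `c` of `F[x, x⁻¹, t] ⊕ F c`. -/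
noncomputable def loopC : BlockLoop F := (0, 1)

open scoped Classical in
/-- The bracket
`[x^α f(t), x^β g(t)] = x^{α+β}(β f'(t)g(t) - α f(t)g'(t)) + α δ_{α,-β} f(0)g(0) c`
on `F[x, x⁻¹, t] ⊕ F c`, with `c` central, extended bilinearly. -/
noncomputable def loopBracket (p q : BlockLoop F) : BlockLoop F :=
  (p.1.sum fun α f => q.1.sum fun β g =>
      Finsupp.single (α + β)
        ((β : F) • (Polynomial.derivative f * g) - (α : F) • (f * Polynomial.derivative g)),
   p.1.sum fun α f => q.1.sum fun β g =>
      if β = -α then (α : F) * (f.eval 0 * g.eval 0) else 0)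

end Loop

set_option linter.unusedSectionVars false

section AuxProof

open Polynomial
open scoped Classical

variable {F : Type*} [Field F] [CharZero F]

/-- polynomial part of the bracket of monomials -/
noncomputable def pB (α β : ℤ) (f g : Polynomial F) : Polynomial F :=
  (β : F) • (derivative f * g) - (α : F) • (f * derivative g)

/-- central part of the bracket of monomials -/
noncomputable def cB (α β : ℤ) (f g : Polynomial F) : F :=
  if β = -α then (α : F) * (f.eval 0 * g.eval 0) else 0

lemma pB_zero_left (α β : ℤ) (g : Polynomial F) : pB α β 0 g = 0 := by simp [pB]
lemma pB_zero_right (α β : ℤ) (f : Polynomial F) : pB α β f 0 = 0 := by simp [pB]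

lemma pB_add_left (α β : ℤ) (f₁ f₂ g : Polynomial F) :
    pB α β (f₁ + f₂) g = pB α β f₁ g + pB α β f₂ g := by
  simp only [pB, map_add, add_mul, mul_add, smul_add]; abel

lemma pB_add_right (α β : ℤ) (f g₁ g₂ : Polynomial F) :
    pB α β f (g₁ + g₂) = pB α β f g₁ + pB α β f g₂ := by
  simp only [pB, map_add, add_mul, mul_add, smul_add]; abel

lemma pB_smul_left (α β : ℤ) (c : F) (f g : Polynomial F) :
    pB α β (c • f) g = c • pB α β f g := by
  simp only [pB, map_smul, smul_mul_assoc, mul_smul_comm, smul_sub, smul_comm c]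

lemma pB_smul_right (α β : ℤ) (c : F) (f g : Polynomial F) :
    pB α β f (c • g) = c • pB α β f g := by
  simp only [pB, map_smul, smul_mul_assoc, mul_smul_comm, smul_sub, smul_comm c]

lemma cB_zero_left (α β : ℤ) (g : Polynomial F) : cB α β (0 : Polynomial F) g = 0 := by
  simp [cB]
lemma cB_zero_right (α β : ℤ) (f : Polynomial F) : cB α β f (0 : Polynomial F) = 0 := by
  simp [cB]

lemma cB_add_left (α β : ℤ) (f₁ f₂ g : Polynomial F) :
    cB α β (f₁ + f₂) g = cB α β f₁ g + cB α β f₂ g := by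
  unfold cB; split_ifs <;> simp <;> ring

lemma cB_add_right (α β : ℤ) (f g₁ g₂ : Polynomial F) :
    cB α β f (g₁ + g₂) = cB α β f g₁ + cB α β f g₂ := by
  unfold cB; split_ifs <;> simp <;> ring

lemma cB_smul_left (α β : ℤ) (c : F) (f g : Polynomial F) :
    cB α β (c • f) g = c * cB α β f g := by
  unfold cB; split_ifs <;> simp <;> ring

lemma cB_smul_right (α β : ℤ) (c : F) (f g : Polynomial F) :
    cB α β f (c • g) = c * cB α β f g := by
  unfold cB; split_ifs <;> simp <;> ring

/-- the bracket of monomial layers, as a bilinear map -/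
noncomputable def mB (α β : ℤ) : Polynomial F →ₗ[F] Polynomial F →ₗ[F] BlockLoop F :=
  LinearMap.mk₂ F (fun f g => (Finsupp.single (α + β) (pB α β f g), cB α β f g))
    (fun f₁ f₂ g => by
      simp only [pB_add_left, cB_add_left, Finsupp.single_add, Prod.mk_add_mk])
    (fun c f g => by
      simp only [pB_smul_left, cB_smul_left, Finsupp.smul_single, Prod.smul_mk, smul_eq_mul])
    (fun f g₁ g₂ => by
      simp only [pB_add_right, cB_add_right, Finsupp.single_add, Prod.mk_add_mk])
    (fun c f g => by
      simp only [pB_smul_right, cB_smul_right, Finsupp.smul_single, Prod.smul_mk, smul_eq_mul])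

/-- the bracket on `F[x,x⁻¹,t]`, as a bilinear map -/
noncomputable def Tmap : (ℤ →₀ Polynomial F) →ₗ[F] (ℤ →₀ Polynomial F) →ₗ[F] BlockLoop F :=
  Finsupp.lsum F fun α =>
    (Finsupp.lsum (R := F) F).toLinearMap.comp (LinearMap.pi fun β => mB α β)

lemma Tmap_apply (p q : ℤ →₀ Polynomial F) :
    Tmap p q = p.sum fun α f => q.sum fun β g =>
      ((Finsupp.single (α + β) (pB α β f g), cB α β f g) : BlockLoop F) := by
  rw [Tmap, Finsupp.lsum_apply, LinearMap.finsupp_sum_apply]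
  refine Finsupp.sum_congr fun α _ => ?_
  rw [LinearMap.comp_apply, LinearEquiv.coe_coe, Finsupp.lsum_apply]
  exact Finsupp.sum_congr fun β _ => rfl

lemma sum_pair {ι M A B : Type*} [Zero M] [AddCommMonoid A] [AddCommMonoid B]
    (f : ι →₀ M) (g : ι → M → A) (h : ι → M → B) :
    (f.sum fun i b => ((g i b, h i b) : A × B)) = (f.sum g, f.sum h) := by
  classical
  refine Prod.ext ?_ ?_ <;> simp [Finsupp.sum, Prod.fst_sum, Prod.snd_sum]

lemma loopBracket_eq' (p q : BlockLoop F) : loopBracket F p q = Tmap p.1 q.1 := by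
  rw [Tmap_apply]
  have h1 : (p.1.sum fun α f => q.1.sum fun β g =>
        ((Finsupp.single (α + β) (pB α β f g), cB α β f g) : BlockLoop F))
      = p.1.sum fun α f =>
        ((q.1.sum fun β g => Finsupp.single (α + β) (pB α β f g),
          q.1.sum fun β g => cB α β f g) : BlockLoop F) :=
    Finsupp.sum_congr fun α _ => sum_pair _ _ _
  rw [h1, sum_pair]
  rfl

/-- `loopBracket` as a bilinear map. -/
noncomputable def lbL : BlockLoop F →ₗ[F] BlockLoop F →ₗ[F] BlockLoop F :=
  LinearMap.mk₂ F (loopBracket F)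
    (fun p p' q => by simp [loopBracket_eq'])
    (fun c p q => by simp [loopBracket_eq'])
    (fun p q q' => by simp [loopBracket_eq'])
    (fun c p q => by simp [loopBracket_eq'])

lemma lb_mono (α β : ℤ) (f g : Polynomial F) :
    loopBracket F (loopMono F α f) (loopMono F β g) =
      (Finsupp.single (α + β) (pB α β f g), cB α β f g) := by
  rw [loopBracket_eq']
  show Tmap (Finsupp.single α f) (Finsupp.single β g) = _
  rw [Tmap_apply]
  rw [Finsupp.sum_single_index]
  · rw [Finsupp.sum_single_index]
    simp [pB_zero_right, cB_zero_right]
  · simp [pB_zero_left, cB_zero_left]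

lemma pB_pow' (α β : ℤ) (m n : ℕ) :
    pB α β ((X : Polynomial F) ^ m) (X ^ n) = ((β : F) * m - (α : F) * n) • X ^ (m + n - 1) := by
  rcases m with _ | m <;> rcases n with _ | n <;>
    simp [pB, derivative_X_pow, smul_eq_C_mul] <;> push_cast <;> ring

lemma lb_c_left (q : BlockLoop F) : loopBracket F (loopC F) q = 0 := by
  rw [loopBracket_eq']
  show Tmap 0 q.1 = 0
  simp

lemma lb_c_right (q : BlockLoop F) : loopBracket F q (loopC F) = 0 := by
  rw [loopBracket_eq']
  show Tmap q.1 0 = 0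
  simp

end AuxProof

/-- `BIdx ≃ ℕ`, sending `i` to `(i+1).toNat`. -/
def bidxEquiv : BIdx ≃ ℕ where
  toFun i := (i.1 + 1).toNat
  invFun n := ⟨(n : ℤ) - 1, by omega⟩
  left_inv := by rintro ⟨i, hi⟩; ext1; simp; omega
  right_inv := by intro n; simp

/-- The space `F[x, x⁻¹, t] ⊕ F c` with the bracket
`[x^α f(t), x^β g(t)] = x^{α+β}(β f'g - α fg') + α δ_{α,-β} f(0)g(0) c`
(`c` central) is a Lie algebra, and `L_{α,i} ↦ x^α t^{i+1}`, `c ↦ c` defines a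
Lie algebra isomorphism from `B(ℤ)` onto it. -/
theorem block_loop_realization
    (BZ : Type*) [LieRing BZ] [LieAlgebra F BZ]
    (LZ : ℤ → BIdx → BZ) (cZ : BZ)
    (hrelZ : IsBlockAlgebraZ (F := F) LZ cZ)
    (bZ : Module.Basis ((ℤ × BIdx) ⊕ Unit) F BZ)
    (hbLZ : ∀ p : ℤ × BIdx, bZ (Sum.inl p) = LZ p.1 p.2)
    (hbcZ : bZ (Sum.inr ()) = cZ) :
    -- the bracket is antisymmetric and satisfies the Jacobi identity:
    (∀ x y : BlockLoop F, loopBracket F x y = - loopBracket F y x)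
    ∧ (∀ x y z : BlockLoop F,
        loopBracket F x (loopBracket F y z) + loopBracket F y (loopBracket F z x)
          + loopBracket F z (loopBracket F x y) = 0)
    -- and `L_{α,i} ↦ x^α t^{i+1}`, `c ↦ c` is an isomorphism of Lie algebras:
    ∧ ∃ e : BZ ≃ₗ[F] BlockLoop F,
        (∀ (α : ℤ) (i : BIdx), e (LZ α i) = loopMono F α (Polynomial.X ^ (i.1 + 1).toNat))
        ∧ e cZ = loopC F
        ∧ (∀ x y : BZ, e ⁅x, y⁆ = loopBracket F (e x) (e y)) := by
  classical
  obtain ⟨hrel1, hrel2⟩ := hrelZ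
  -- the natural basis of `BlockLoop F`
  let bL : Module.Basis ((ℤ × BIdx) ⊕ Unit) F (BlockLoop F) :=
    ((Finsupp.basis fun _ : ℤ => Polynomial.basisMonomials F).prod
        (Module.Basis.singleton Unit F)).reindex
      (Equiv.sumCongr
        ((Equiv.sigmaEquivProd ℤ ℕ).trans (Equiv.prodCongr (Equiv.refl ℤ) bidxEquiv.symm))
        (Equiv.refl Unit))
  have hbL1 : ∀ (α : ℤ) (i : BIdx),
      bL (Sum.inl (α, i)) = loopMono F α (Polynomial.X ^ (i.1 + 1).toNat) := by
    intro α i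
    have h1 : bL (Sum.inl (α, i)) =
        ((Finsupp.basis fun _ : ℤ => Polynomial.basisMonomials F).prod
          (Module.Basis.singleton Unit F)) (Sum.inl ⟨α, (i.1 + 1).toNat⟩) := by
      rw [Module.Basis.reindex_apply]
      congr 1
    rw [h1]
    refine Prod.ext ?_ ?_
    · rw [Module.Basis.prod_apply_inl_fst, Finsupp.coe_basis]
      simp [loopMono, Polynomial.X_pow_eq_monomial]
    · rw [Module.Basis.prod_apply_inl_snd]; rfl
  have hbL2 : bL (Sum.inr ()) = loopC F := by
    have h1 : bL (Sum.inr ()) =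
        ((Finsupp.basis fun _ : ℤ => Polynomial.basisMonomials F).prod
          (Module.Basis.singleton Unit F)) (Sum.inr ()) := by
      rw [Module.Basis.reindex_apply]; rfl
    rw [h1]
    refine Prod.ext ?_ ?_
    · rw [Module.Basis.prod_apply_inr_fst]; rfl
    · rw [Module.Basis.prod_apply_inr_snd, Module.Basis.singleton_apply]; rfl
  let e : BZ ≃ₗ[F] BlockLoop F := bZ.equiv bL (Equiv.refl _)
  have he : ∀ u, e (bZ u) = bL u := fun u => bZ.equiv_apply u bL (Equiv.refl _)
  have he1 : ∀ (α : ℤ) (i : BIdx),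
      e (LZ α i) = loopMono F α (Polynomial.X ^ (i.1 + 1).toNat) := by
    intro α i
    rw [← hbLZ (α, i), he]
    exact hbL1 α i
  have he2 : e cZ = loopC F := by rw [← hbcZ, he]; exact hbL2
  -- the bracket computation on basic elements
  have hmono : ∀ (α β : ℤ) (i j : BIdx),
      e ⁅LZ α i, LZ β j⁆ = loopBracket F (e (LZ α i)) (e (LZ β j)) := by
    intro α β i j
    rw [he1, he1, lb_mono, hrel1, map_add]
    by_cases h : (-1 : ℤ) ≤ i.1 + j.1
    · rw [dif_pos h, if_neg (by rintro ⟨-, h2⟩; omega), map_zero, add_zero, map_smul, he1]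
      have hm : (((i.1 + 1).toNat : ℤ)) = i.1 + 1 := Int.toNat_of_nonneg (by have := i.2; omega)
      have hn : (((j.1 + 1).toNat : ℤ)) = j.1 + 1 := Int.toNat_of_nonneg (by have := j.2; omega)
      have hmF : (((i.1 + 1).toNat : ℕ) : F) = (i.1 : F) + 1 := by exact_mod_cast hm
      have hnF : (((j.1 + 1).toNat : ℕ) : F) = (j.1 : F) + 1 := by exact_mod_cast hn
      have hexp : (i.1 + 1).toNat + (j.1 + 1).toNat - 1 = (i.1 + j.1 + 1).toNat := by omega
      have hcB : cB α β ((Polynomial.X : Polynomial F) ^ (i.1 + 1).toNat)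
          (Polynomial.X ^ (j.1 + 1).toNat) = 0 := by
        have hmn : (i.1 + 1).toNat ≠ 0 ∨ (j.1 + 1).toNat ≠ 0 := by omega
        unfold cB
        split_ifs with hc
        · rcases hmn with h' | h' <;> simp [zero_pow h']
        · rfl
      rw [pB_pow', hcB, hexp,
        show ((β : F) * ((i.1 + 1).toNat : ℕ) - (α : F) * ((j.1 + 1).toNat : ℕ))
          = (((i.1 : F) + 1) * (β : F) - ((j.1 : F) + 1) * (α : F)) by rw [hmF, hnF]; ring]
      simp only [loopMono, Prod.smul_mk, Finsupp.smul_single, smul_zero]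
    · rw [dif_neg h, map_zero, zero_add]
      have hi : i.1 = -1 := by have := i.2; have := j.2; omega
      have hj : j.1 = -1 := by have := i.2; have := j.2; omega
      have hm : (i.1 + 1).toNat = 0 := by omega
      have hn : (j.1 + 1).toNat = 0 := by omega
      have hp : pB α β (1 : Polynomial F) 1 = 0 := by simp [pB]
      rw [hm, hn, pow_zero, hp, Finsupp.single_zero]
      by_cases hab : α = -β
      · rw [if_pos ⟨hab, by omega⟩, map_smul, he2]
        have hcb : cB α β (1 : Polynomial F) 1 = (α : F) := by
          unfold cB
          rw [if_pos (show β = -α by omega)]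
          simp
        rw [hcb]
        simp [loopC, Prod.smul_mk]
      · rw [if_neg (by tauto), map_zero]
        have hcb : cB α β (1 : Polynomial F) 1 = 0 := by
          unfold cB
          rw [if_neg (show ¬ β = -α by omega)]
        rw [hcb]
        rfl
  -- the bracket compatibility, by bilinearity
  have hbr : ∀ x y : BZ, e ⁅x, y⁆ = loopBracket F (e x) (e y) := by
    let A : BZ →ₗ[F] BZ →ₗ[F] BlockLoop F :=
      LinearMap.mk₂ F (fun x y => e ⁅x, y⁆)
        (fun x x' y => by show e ⁅x + x', y⁆ = e ⁅x, y⁆ + e ⁅x', y⁆; rw [add_lie, map_add])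
        (fun c x y => by show e ⁅c • x, y⁆ = c • e ⁅x, y⁆; rw [smul_lie, map_smul])
        (fun x y y' => by show e ⁅x, y + y'⁆ = e ⁅x, y⁆ + e ⁅x, y'⁆; rw [lie_add, map_add])
        (fun c x y => by show e ⁅x, c • y⁆ = c • e ⁅x, y⁆; rw [lie_smul, map_smul])
    let Bm : BZ →ₗ[F] BZ →ₗ[F] BlockLoop F :=
      (lbL (F := F)).compl₁₂ e.toLinearMap e.toLinearMap
    have hAB : A = Bm := by
      refine bZ.ext fun u => bZ.ext fun v => ?_
      have hA : A (bZ u) (bZ v) = e ⁅bZ u, bZ v⁆ := rfl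
      have hB : Bm (bZ u) (bZ v) = loopBracket F (e (bZ u)) (e (bZ v)) := rfl
      rw [hA, hB]
      rcases u with ⟨α, i⟩ | u <;> rcases v with ⟨β, j⟩ | v
      · rw [hbLZ, hbLZ]; exact hmono α β i j
      · rw [hbLZ, hbcZ, show ⁅LZ α i, cZ⁆ = 0 by rw [← lie_skew, hrel2, neg_zero],
          map_zero, he2, lb_c_right]
      · rw [hbcZ, hbLZ, hrel2, map_zero, he2, lb_c_left]
      · rw [hbcZ, lie_self, map_zero, he2, lb_c_left]
    intro x y
    exact DFunLike.congr_fun (DFunLike.congr_fun hAB x) y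
  refine ⟨?_, ?_, e, he1, he2, hbr⟩
  · intro x y
    obtain ⟨a, rfl⟩ := e.surjective x
    obtain ⟨b, rfl⟩ := e.surjective y
    rw [← hbr, ← hbr, ← map_neg, lie_skew]
  · intro x y z
    obtain ⟨a, rfl⟩ := e.surjective x
    obtain ⟨b, rfl⟩ := e.surjective y
    obtain ⟨c, rfl⟩ := e.surjective z
    simp only [← hbr, ← map_add]
    rw [lie_jacobi, map_zero]
end

section
/- With the order ≻ discrete with minimal positive element a, letting H_+ = {x ∈ G | x ≻ na for all n ∈ ℤ} and H_- = -H_+, one has the partition G = aℤ ∪ H_+ ∪ H_- (disjoint union), and the subalgebra B(H_+) generated by {L_{α,k} | α ∈ H_+, k ≥ -1} annihilates the B(aℤ)-submodule M_a(Λ,≻): B(H_+)·M_a(Λ,≻) = 0. -/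
open UniversalEnvelopingAlgebra

variable {F : Type*} [Field F] [CharZero F] {G : AddSubgroup F}
variable {B : Type*} [LieRing B] [LieAlgebra F B]

section Verma

variable (F) [LinearOrder G] (L : G → BIdx → B) (c : B) (Λ0 : BIdx → F) (Λc : F)

/-- The generators of the left ideal `I(Λ, ≻)` of `U(B(G))`: the elements
`L_{α,i}` with `α ≻ 0`, and `h - Λ(h)·1` for `h ∈ B(G)_0` (it suffices to take
`h` among the spanning vectors `L_{0,i}` and `c` of `B(G)_0`, where
`Λ0 : BIdx → F` and `Λc : F` record the values of `Λ ∈ B(G)_0^*` on them). -/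
def vermaGens : Set (UniversalEnvelopingAlgebra F B) :=
  {x | ∃ (α : G) (i : BIdx), 0 < α ∧ x = ι F (L α i)}
    ∪ {x | ∃ i : BIdx, x = ι F (L 0 i) - algebraMap F (UniversalEnvelopingAlgebra F B) (Λ0 i)}
    ∪ {ι F c - algebraMap F (UniversalEnvelopingAlgebra F B) Λc}

/-- The left ideal `I(Λ, ≻)` of `U(B(G))`. -/
def vermaIdeal : Submodule (UniversalEnvelopingAlgebra F B) (UniversalEnvelopingAlgebra F B) :=
  Submodule.span (UniversalEnvelopingAlgebra F B) (vermaGens F L c Λ0 Λc)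

/-- The Verma module `M(Λ, ≻) = U(B(G)) / I(Λ, ≻)`. -/
abbrev VermaMod : Type _ :=
  UniversalEnvelopingAlgebra F B ⧸ vermaIdeal F L c Λ0 Λc

/-- The highest weight vector `v_Λ`, the image of `1` in `M(Λ, ≻)`. -/
def hwVec : VermaMod F L c Λ0 Λc :=
  Submodule.Quotient.mk 1

/-- The monomial `L_{α_1,i_1} ⋯ L_{α_k,i_k} ∈ U(B(G))` attached to the list
`l = [(α_1,i_1),…,(α_k,i_k)]`. -/
def blockMono (l : List (G × BIdx)) : UniversalEnvelopingAlgebra F B :=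
  (l.map fun p => ι F (L p.1 p.2)).prod

/-- The weight space `M_α` of the Verma module: the span of the vectors
`L_{-α_1,i_1} ⋯ L_{-α_k,i_k} v_Λ` with all `α_j ≻ 0` and `α_1 + ⋯ + α_k = -α`. -/
def vermaWt (α : G) : Submodule F (VermaMod F L c Λ0 Λc) :=
  Submodule.span F {m | ∃ l : List (G × BIdx), (∀ p ∈ l, p.1 < 0)
    ∧ (l.map Prod.fst).sum = α
    ∧ m = Submodule.Quotient.mk (blockMono F L l)}

end Verma

/-- With the order discrete with minimal positive element `a`, letting
`H_+ = {x ∈ G | x ≻ na for all n ∈ ℤ}` and `H_- = -H_+`, one has the disjoint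
partition `G = aℤ ∪ H_+ ∪ H_-`, and the subalgebra `B(H_+)` generated by
`{L_{α,k} | α ∈ H_+, k ≥ -1}` annihilates the `B(aℤ)`-submodule `M_a(Λ,≻)`. -/
theorem verma_discrete_partition_annihilate [LinearOrder G]
    (hord : ∀ x y z : G, x < y → x + z < y + z)
    (L : G → BIdx → B) (c : B)
    (hrel : IsBlockAlgebra L c)
    (b : Module.Basis ((G × BIdx) ⊕ Unit) F B)
    (hbL : ∀ p : G × BIdx, b (Sum.inl p) = L p.1 p.2)
    (hbc : b (Sum.inr ()) = c)
    (Λ0 : BIdx → F) (Λc : F)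
    (a : G) (ha : 0 < a) (hdiscrete : ¬ ∃ β : G, 0 < β ∧ β < a)
    (Hplus : Set G) (hHplus : Hplus = {x : G | ∀ n : ℤ, n • a < x})
    (Ma : Submodule F (VermaMod F L c Λ0 Λc))
    (hMa : Ma = Submodule.span F {m | ∃ l : List ((ℤ × BIdx) ⊕ Unit),
      m = Submodule.Quotient.mk ((l.map (Sum.elim
            (fun q : ℤ × BIdx => ι F (L (q.1 • a) q.2))
            (fun _ => ι F c))).prod)}) :
    -- `G = aℤ ∪ H_+ ∪ H_-` ...
    (∀ x : G, (∃ n : ℤ, x = n • a) ∨ x ∈ Hplus ∨ -x ∈ Hplus)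
    -- ... disjointly:
    ∧ (∀ x : G, (∃ n : ℤ, x = n • a) → x ∉ Hplus ∧ -x ∉ Hplus)
    ∧ (∀ x : G, x ∈ Hplus → -x ∉ Hplus)
    -- `B(H_+) ⋅ M_a(Λ,≻) = 0`:
    ∧ (∀ α : G, α ∈ Hplus → ∀ k : BIdx, ∀ m ∈ Ma,
        (ι F (L α k) : UniversalEnvelopingAlgebra F B) • m = 0) := by
  
  subst hHplus hMa
  -- basic order arithmetic
  have hneg_lt : ∀ x y : G, x < y → -y < -x := by
    intro x y h
    have h' := hord x y (-x - y) h
    have h1 : x + (-x - y) = -y := by abel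
    have h2 : y + (-x - y) = -x := by abel
    rwa [h1, h2] at h'
  have hmul : ∀ n : ℤ, 1 ≤ n → 0 < n • a := by
    refine Int.le_induction ?_ ?_
    · simpa using ha
    · intro n hn ih
      have h2 := hord 0 (n • a) a ih
      rw [zero_add] at h2
      rw [add_zsmul, one_zsmul]
      exact ha.trans h2
  have hlt : ∀ k n : ℤ, k < n → k • a < n • a := by
    intro k n h
    have h1 : 0 < (n - k) • a := hmul _ (by omega)
    have h2 := hord 0 ((n - k) • a) (k • a) h1
    rw [zero_add, ← add_zsmul] at h2
    have h3 : n - k + k = n := by omega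
    rwa [h3] at h2
  have part1 : ∀ x : G, (∃ n : ℤ, x = n • a) ∨
      (x ∈ {x : G | ∀ n : ℤ, n • a < x}) ∨ (-x ∈ {x : G | ∀ n : ℤ, n • a < x}) := by
    intro x
    by_cases h1 : ∀ n : ℤ, n • a < x
    · exact Or.inr (Or.inl h1)
    by_cases h2 : ∀ n : ℤ, n • a < -x
    · exact Or.inr (Or.inr h2)
    left
    push_neg at h1 h2
    obtain ⟨n, hn⟩ := h1
    obtain ⟨m, hm⟩ := h2
    -- lower bound for the set S = {k | k • a ≤ x}
    have hlow : (-m) • a ≤ x := by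
      rcases eq_or_lt_of_le hm with h | h
      · rw [neg_zsmul, ← h, neg_neg]
      · have := hneg_lt (-x) (m • a) h
        rw [neg_neg] at this
        rw [neg_zsmul]
        exact le_of_lt this
    have hbdd : ∀ z : ℤ, z • a ≤ x → z ≤ n := by
      intro z hz
      by_contra hc
      push_neg at hc
      exact absurd (hz.trans hn) (not_le.2 (hlt n z hc))
    obtain ⟨k, hk1, hk2⟩ := Int.exists_greatest_of_bdd ⟨n, hbdd⟩ ⟨-m, hlow⟩
    refine ⟨k, ?_⟩
    rcases eq_or_lt_of_le hk1 with h | h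
    · exact h.symm
    · -- then 0 < x - k • a < a, contradicting discreteness
      exfalso
      have hx2 : x < (k + 1) • a := by
        by_contra hc
        push_neg at hc
        have := hk2 (k + 1) hc
        omega
      apply hdiscrete
      refine ⟨x - k • a, ?_, ?_⟩
      · have := hord (k • a) x (-(k • a)) h
        have e1 : k • a + -(k • a) = 0 := by abel
        have e2 : x + -(k • a) = x - k • a := by abel
        rwa [e1, e2] at this
      · have := hord x ((k + 1) • a) (-(k • a)) hx2
        have e1 : x + -(k • a) = x - k • a := by abel
        have e2 : (k + 1) • a + -(k • a) = (k + 1) • a - k • a := by abel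
        rw [e1, e2, add_zsmul, one_zsmul] at this
        have e3 : k • a + a - k • a = a := by abel
        rwa [e3] at this
  have part2 : ∀ x : G, (∃ n : ℤ, x = n • a) →
      x ∉ {x : G | ∀ n : ℤ, n • a < x} ∧ -x ∉ {x : G | ∀ n : ℤ, n • a < x} := by
    rintro x ⟨n, rfl⟩
    constructor
    · intro h; exact lt_irrefl _ (h n)
    · intro h
      have := h (-n)
      rw [neg_zsmul] at this
      exact lt_irrefl _ this
  have part3 : ∀ x : G, x ∈ {x : G | ∀ n : ℤ, n • a < x} →
      -x ∉ {x : G | ∀ n : ℤ, n • a < x} := by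
    intro x hx h
    have h1 : (0 : G) < x := by simpa using hx 0
    have h2 : (0 : G) < -x := by simpa using h 0
    have := hneg_lt 0 (-x) h2
    rw [neg_neg, neg_zero] at this
    exact lt_irrefl _ (h1.trans this)
  refine ⟨part1, part2, part3, ?_⟩
  -- positivity and shift-stability of H_+
  have hpos : ∀ α : G, (∀ n : ℤ, n • a < α) → 0 < α := by
    intro α hα; simpa using hα 0
  have hshift : ∀ (α : G), (∀ n : ℤ, n • a < α) → ∀ q : ℤ, ∀ n : ℤ, n • a < α + q • a := by
    intro α hα q n
    have h1 := hord ((n - q) • a) α (q • a) (hα (n - q))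
    rw [← add_zsmul] at h1
    have e : n - q + q = n := by omega
    rwa [e] at h1
  have hne : ∀ (α : G), (∀ n : ℤ, n • a < α) → ∀ q : ℤ, α ≠ -(q • a) := by
    intro α hα q h
    have := hα (-q)
    rw [neg_zsmul, ← h] at this
    exact lt_irrefl _ this
  -- the key computation in U(B(G))
  have key : ∀ l : List ((ℤ × BIdx) ⊕ Unit), ∀ α : G, (∀ n : ℤ, n • a < α) → ∀ k : BIdx,
      ι F (L α k) * (l.map (Sum.elim
            (fun q : ℤ × BIdx => ι F (L (q.1 • a) q.2))
            (fun _ => ι F c))).prod ∈ vermaIdeal F L c Λ0 Λc := by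
    intro l
    induction l with
    | nil =>
      intro α hα k
      simp only [List.map_nil, List.prod_nil, mul_one]
      exact Submodule.subset_span
        (Set.mem_union_left _ (Set.mem_union_left _ ⟨α, k, hpos α hα, rfl⟩))
    | cons hd tl ih =>
      intro α hα k
      simp only [List.map_cons, List.prod_cons]
      set g : UniversalEnvelopingAlgebra F B := Sum.elim
          (fun q : ℤ × BIdx => ι F (L (q.1 • a) q.2)) (fun _ => ι F c) hd with hg
      set P : UniversalEnvelopingAlgebra F B := (tl.map (Sum.elim
          (fun q : ℤ × BIdx => ι F (L (q.1 • a) q.2)) (fun _ => ι F c))).prod with hP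
      have hsplit : ι F (L α k) * (g * P)
          = g * (ι F (L α k) * P) + (ι F (L α k) * g - g * ι F (L α k)) * P := by noncomm_ring
      rw [hsplit]
      refine Submodule.add_mem _ ?_ ?_
      · have := Submodule.smul_mem (vermaIdeal F L c Λ0 Λc) g (ih α hα k)
        simpa [smul_eq_mul] using this
      · cases hd with
        | inl q =>
          have hcomm : ι F (L α k) * g - g * ι F (L α k)
              = ι F ⁅L α k, L (q.1 • a) q.2⁆ := by
            letI : LieRing (UniversalEnvelopingAlgebra F B) := LieRing.ofAssociativeRing
            rw [hg, Sum.elim_inl, LieHom.map_lie, Ring.lie_def]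
          rw [hcomm]
          have hbr := hrel.1 α (q.1 • a) k q.2
          rw [if_neg (by exact fun h => hne α hα q.1 h.1)] at hbr
          by_cases hk : (-1 : ℤ) ≤ k.1 + q.2.1
          · rw [dif_pos hk, add_zero] at hbr
            rw [hbr, map_smul, smul_mul_assoc]
            exact Submodule.smul_of_tower_mem _ _
              (ih (α + q.1 • a) (hshift α hα q.1) ⟨k.1 + q.2.1, hk⟩)
          · rw [dif_neg hk, add_zero] at hbr
            rw [hbr, map_zero, zero_mul]
            exact Submodule.zero_mem _
        | inr u =>
          have hcomm : ι F (L α k) * g - g * ι F (L α k) = ι F ⁅L α k, c⁆ := by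
            letI : LieRing (UniversalEnvelopingAlgebra F B) := LieRing.ofAssociativeRing
            rw [hg, Sum.elim_inr, LieHom.map_lie, Ring.lie_def]
          rw [hcomm, ← lie_skew, hrel.2, neg_zero, map_zero, zero_mul]
          exact Submodule.zero_mem _
  intro α hα k m hm
  induction hm using Submodule.span_induction with
  | mem x hx =>
    obtain ⟨l, rfl⟩ := hx
    rw [← Submodule.Quotient.mk_smul, smul_eq_mul]
    exact (Submodule.Quotient.mk_eq_zero _).2 (key l α hα k)
  | zero => simp
  | add x y _ _ hx hy => rw [smul_add, hx, hy, add_zero]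
  | smul r x _ hx => rw [smul_comm, hx, smul_zero]
end

section
/- With the order ≻ discrete with minimal positive element a, the Verma module satisfies M(Λ,≻) ≅ U(B(G)) ⊗_{U(B(aℤ)+B(H_+))} M_a(Λ,≻) as B(G)-modules, where the B(aℤ)+B(H_+)-module structure on M_a(Λ,≻) extends its B(aℤ)-structure by letting B(H_+) act as zero. -/
open UniversalEnvelopingAlgebra

variable {F : Type*} [Field F] [CharZero F] {G : AddSubgroup F}
variable {B : Type*} [LieRing B] [LieAlgebra F B]

set_option synthInstance.maxHeartbeats 1000000 in
set_option maxHeartbeats 4000000 in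
theorem verma_induced_from_Ma_aux [LinearOrder G]
    (hord : ∀ x y z : G, x < y → x + z < y + z)
    (L : G → BIdx → B) (c : B)
    (hrel : IsBlockAlgebra L c)
    (b : Module.Basis ((G × BIdx) ⊕ Unit) F B)
    (hbL : ∀ p : G × BIdx, b (Sum.inl p) = L p.1 p.2)
    (hbc : b (Sum.inr ()) = c)
    (Λ0 : BIdx → F) (Λc : F)
    (a : G) (ha : 0 < a) (hdiscrete : ¬ ∃ β : G, 0 < β ∧ β < a)
    (Up : Subalgebra F (UniversalEnvelopingAlgebra F B))
    (hUp : Up = Algebra.adjoin F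
      ({x | ∃ (n : ℤ) (k : BIdx), x = ι F (L (n • a) k)}
        ∪ {x | ∃ (α : G) (k : BIdx), (∀ n : ℤ, n • a < α) ∧ x = ι F (L α k)}
        ∪ {ι F c}))
    (Ma : Submodule Up (VermaMod F L c Λ0 Λc))
    (hMa : Ma = Submodule.span Up {hwVec F L c Λ0 Λc}) :
    ∀ (N : Type _) [AddCommGroup N] [Module (UniversalEnvelopingAlgebra F B) N],
      ∀ φ : Ma →ₗ[Up] N,
        ∃! ψ : VermaMod F L c Λ0 Λc →ₗ[UniversalEnvelopingAlgebra F B] N,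
          ∀ m : Ma, ψ (m : VermaMod F L c Λ0 Λc) = φ m := by
  intro N _ _ φ
  classical
  have hle : ∀ x y z : G, x ≤ y → x + z ≤ y + z := by
    intro x y z h
    rcases eq_or_lt_of_le h with rfl | h
    · exact le_rfl
    · exact (hord x y z h).le
  have hnn : ∀ n : ℤ, 0 ≤ n → 0 ≤ n • a := by
    refine fun n hn => Int.le_induction (motive := fun n _ => 0 ≤ n • a) (m := 0) (le_of_eq (zero_zsmul a).symm) (fun n _ ih => ?_) n hn
    have h1 : n • a < (n + 1) • a := by
      have := hord 0 a (n • a) ha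
      rw [zero_add] at this
      rw [add_zsmul, one_zsmul, add_comm]
      exact this
    exact le_of_lt (lt_of_le_of_lt ih h1)
  have key : ∀ α : G, 0 < α → (∃ n : ℤ, α = n • a) ∨ (∀ n : ℤ, n • a < α) := by
    intro α hα
    by_cases hH : ∀ n : ℤ, n • a < α
    · exact Or.inr hH
    · left
      push_neg at hH
      obtain ⟨lb, hlb, hmin⟩ := Int.exists_least_of_bdd (P := fun n => α ≤ n • a)
        (by
          refine ⟨1, fun z hz => ?_⟩
          by_contra hz1
          push_neg at hz1
          have : z • a ≤ 0 := by
            have h1 : 0 ≤ (-z) • a := hnn (-z) (by omega)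
            have h2 := hle 0 ((-z) • a) (z • a) h1
            rw [zero_add, neg_zsmul, neg_add_cancel] at h2
            exact h2
          exact absurd (lt_of_lt_of_le hα hz) (not_lt.2 this)) hH
      refine ⟨lb, ?_⟩
      have hlt : (lb - 1) • a < α := by
        by_contra h
        push_neg at h
        have := hmin (lb - 1) h
        omega
      have hβ1 : 0 ≤ lb • a - α := by
        have := hle α (lb • a) (-α) hlb
        rw [add_neg_cancel] at this
        rw [sub_eq_add_neg]
        exact this
      have hβ2 : lb • a - α < a := by
        have := hord ((lb - 1) • a) α (a - α) hlt
        have hL : (lb - 1) • a + (a - α) = lb • a - α := by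
          rw [sub_zsmul, one_zsmul]; abel
        have hR : α + (a - α) = a := by abel
        rw [hL, hR] at this
        exact this
      rcases eq_or_lt_of_le hβ1 with h0 | h0
      · rw [eq_comm, sub_eq_zero] at h0
        exact h0.symm
      · exact absurd ⟨lb • a - α, h0, hβ2⟩ hdiscrete
  have hvUp : ∀ g ∈ vermaGens F L c Λ0 Λc, g ∈ Up := by
    intro g hg
    rw [hUp]
    rcases hg with (⟨α, i, hα, rfl⟩ | ⟨i, rfl⟩) | hg
    · rcases key α hα with ⟨n, rfl⟩ | hH
      · exact Algebra.subset_adjoin (Or.inl (Or.inl ⟨n, i, rfl⟩))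
      · exact Algebra.subset_adjoin (Or.inl (Or.inr ⟨α, i, hH, rfl⟩))
    · refine sub_mem ?_ (Subalgebra.algebraMap_mem _ _)
      refine Algebra.subset_adjoin (Or.inl (Or.inl ⟨0, i, ?_⟩))
      rw [zero_zsmul]
    · rw [Set.mem_singleton_iff] at hg
      subst hg
      exact sub_mem (Algebra.subset_adjoin (Or.inr rfl)) (Subalgebra.algebraMap_mem _ _)
  have hv : hwVec F L c Λ0 Λc ∈ Ma := by
    rw [hMa]; exact Submodule.mem_span_singleton_self _
  set x₀ : N := φ ⟨hwVec F L c Λ0 Λc, hv⟩ with hx₀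
  have hgen0 : ∀ g ∈ vermaGens F L c Λ0 Λc, g • x₀ = 0 := by
    intro g hg
    have hgU := hvUp g hg
    have h1 : g • (hwVec F L c Λ0 Λc) = 0 := by
      show g • (Submodule.Quotient.mk 1 : VermaMod F L c Λ0 Λc) = 0
      rw [← Submodule.Quotient.mk_smul, smul_eq_mul, mul_one]
      exact (Submodule.Quotient.mk_eq_zero _).2 (Submodule.subset_span hg)
    have h2 : (⟨g, hgU⟩ : Up) • (⟨hwVec F L c Λ0 Λc, hv⟩ : Ma) = 0 := by
      apply Subtype.ext
      exact h1
    have h3 : (⟨g, hgU⟩ : Up) • x₀ = 0 := by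
      rw [hx₀, ← φ.map_smul, h2, map_zero]
    exact (Subalgebra.smul_def (⟨g, hgU⟩ : Up) x₀).symm.trans h3
  have hker : vermaIdeal F L c Λ0 Λc ≤
      LinearMap.ker (LinearMap.toSpanSingleton (UniversalEnvelopingAlgebra F B) N x₀) := by
    rw [vermaIdeal, Submodule.span_le]
    intro g hg
    simp only [SetLike.mem_coe, LinearMap.mem_ker, LinearMap.toSpanSingleton_apply]
    exact hgen0 g hg
  have hψ1 : Submodule.liftQ _ _ hker (hwVec F L c Λ0 Λc) = x₀ := by
    show Submodule.liftQ _ _ hker (Submodule.Quotient.mk 1) = x₀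
    rw [Submodule.liftQ_apply, LinearMap.toSpanSingleton_apply, one_smul]
  refine ⟨Submodule.liftQ _ _ hker, ?_, ?_⟩
  · intro m
    have hm : (m : VermaMod F L c Λ0 Λc) ∈ Submodule.span Up {hwVec F L c Λ0 Λc} := by
      rw [← hMa]; exact m.2
    obtain ⟨u, hu⟩ := Submodule.mem_span_singleton.1 hm
    have hm' : m = u • (⟨hwVec F L c Λ0 Λc, hv⟩ : Ma) := by
      apply Subtype.ext
      exact hu.symm
    have hφ : φ m = (u : UniversalEnvelopingAlgebra F B) • x₀ := by
      rw [hm', φ.map_smul, Subalgebra.smul_def]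
    have hcoe : (m : VermaMod F L c Λ0 Λc)
        = (u : UniversalEnvelopingAlgebra F B) • hwVec F L c Λ0 Λc := by
      rw [← hu, Subalgebra.smul_def]
    rw [hφ, hcoe, map_smul, hψ1]
  · intro ψ' hψ'
    have h1 : ψ' (hwVec F L c Λ0 Λc) = x₀ := hψ' ⟨hwVec F L c Λ0 Λc, hv⟩
    apply LinearMap.ext
    intro x
    obtain ⟨y, rfl⟩ := Submodule.Quotient.mk_surjective _ x
    have hy : (Submodule.Quotient.mk y : VermaMod F L c Λ0 Λc)
        = y • hwVec F L c Λ0 Λc := by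
      show _ = y • (Submodule.Quotient.mk 1 : VermaMod F L c Λ0 Λc)
      rw [← Submodule.Quotient.mk_smul, smul_eq_mul, mul_one]
    rw [hy, map_smul, map_smul, h1, hψ1]


set_option synthInstance.maxHeartbeats 1000000 in
set_option maxHeartbeats 1000000 in
/-- With the order discrete with minimal positive element `a`, the Verma module
satisfies `M(Λ,≻) ≅ U(B(G)) ⊗_{U(B(aℤ)+B(H_+))} M_a(Λ,≻)`, expressed here
through the universal property of the induced module: for every `U(B(G))`-module
`N` and every `U(B(aℤ)+B(H_+))`-linear map `φ : M_a(Λ,≻) → N` (where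
`U(B(aℤ)+B(H_+))` is the subalgebra of `U(B(G))` generated by the images of
`B(aℤ)` and `B(H_+)`, and `M_a(Λ,≻)` is its cyclic submodule generated by `v_Λ`,
on which `B(H_+)` indeed acts by zero), there is a unique `U(B(G))`-linear map
`ψ : M(Λ,≻) → N` extending `φ`. -/
theorem verma_induced_from_Ma [LinearOrder G]
    (hord : ∀ x y z : G, x < y → x + z < y + z)
    (L : G → BIdx → B) (c : B)
    (hrel : IsBlockAlgebra L c)
    (b : Module.Basis ((G × BIdx) ⊕ Unit) F B)
    (hbL : ∀ p : G × BIdx, b (Sum.inl p) = L p.1 p.2)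
    (hbc : b (Sum.inr ()) = c)
    (Λ0 : BIdx → F) (Λc : F)
    (a : G) (ha : 0 < a) (hdiscrete : ¬ ∃ β : G, 0 < β ∧ β < a)
    -- the subalgebra `U(B(aℤ) + B(H_+))` of `U(B(G))`:
    (Up : Subalgebra F (UniversalEnvelopingAlgebra F B))
    (hUp : Up = Algebra.adjoin F
      ({x | ∃ (n : ℤ) (k : BIdx), x = ι F (L (n • a) k)}
        ∪ {x | ∃ (α : G) (k : BIdx), (∀ n : ℤ, n • a < α) ∧ x = ι F (L α k)}
        ∪ {ι F c}))
    -- `M_a(Λ,≻)`, as the cyclic `Up`-submodule of `M(Λ,≻)` generated by `v_Λ`: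
    (Ma : Submodule Up (VermaMod F L c Λ0 Λc))
    (hMa : Ma = Submodule.span Up {hwVec F L c Λ0 Λc}) :
    ∀ (N : Type _) [AddCommGroup N] [Module (UniversalEnvelopingAlgebra F B) N],
      ∀ φ : Ma →ₗ[Up] N,
        ∃! ψ : VermaMod F L c Λ0 Λc →ₗ[UniversalEnvelopingAlgebra F B] N,
          ∀ m : Ma, ψ (m : VermaMod F L c Λ0 Λc) = φ m :=
  verma_induced_from_Ma_aux hord L c hrel b hbL hbc Λ0 Λc a ha hdiscrete Up hUp Ma hMa
end

section
/- Assume the order is dense and suppose there exists ε ∈ G_+ with L_{-ε,k} v_Λ ∈ U(B(G)) u_0 for all k ≥ -1, where u_0 is a fixed nonzero weight vector. Then for every x in the ℤ_{≥0}-span of {y ∈ G_+ | y ≼ ε} and every k ≥ -1, one has L_{-x,k} v_Λ ∈ U(B(G)) u_0. -/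
open UniversalEnvelopingAlgebra

variable {F : Type*} [Field F] [CharZero F] {G : AddSubgroup F}
variable {B : Type*} [LieRing B] [LieAlgebra F B]

/-- `k ↦ k+1` on indices. -/
def idxSucc (k : BIdx) : BIdx := ⟨k.1 + 1, by have := k.2; omega⟩

/-- The index `-1`. -/
def idxNeg1 : BIdx := ⟨-1, le_refl _⟩

theorem kill_pos [LinearOrder G] (L : G → BIdx → B) (c : B) (Λ0 : BIdx → F) (Λc : F)
    (α : G) (hα : 0 < α) (i : BIdx) :
    (ι F (L α i) : UniversalEnvelopingAlgebra F B) • hwVec F L c Λ0 Λc = 0 := by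
  show (ι F (L α i) : UniversalEnvelopingAlgebra F B) • Submodule.Quotient.mk 1 = 0
  rw [← Submodule.Quotient.mk_smul, smul_eq_mul, mul_one, Submodule.Quotient.mk_eq_zero]
  exact Submodule.subset_span (Or.inl (Or.inl ⟨α, i, hα, rfl⟩))

section KeyStep

attribute [local instance 100] LieRing.ofAssociativeRing

theorem key_step [LinearOrder G] (L : G → BIdx → B) (c : B) (hrel : IsBlockAlgebra L c)
    (Λ0 : BIdx → F) (Λc : F) (u0 : VermaMod F L c Λ0 Λc)
    (α β : G) (hne : α ≠ -β) (hβ : (β : F) ≠ 0) (k : BIdx)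
    (h1 : (ι F (L α (idxSucc k)) : UniversalEnvelopingAlgebra F B) •
        ((ι F (L β idxNeg1) : UniversalEnvelopingAlgebra F B) • hwVec F L c Λ0 Λc)
        ∈ Submodule.span (UniversalEnvelopingAlgebra F B) {u0})
    (h2 : (ι F (L β idxNeg1) : UniversalEnvelopingAlgebra F B) •
        ((ι F (L α (idxSucc k)) : UniversalEnvelopingAlgebra F B) • hwVec F L c Λ0 Λc)
        ∈ Submodule.span (UniversalEnvelopingAlgebra F B) {u0}) :
    (ι F (L (α + β) k) : UniversalEnvelopingAlgebra F B) • hwVec F L c Λ0 Λc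
      ∈ Submodule.span (UniversalEnvelopingAlgebra F B) {u0} := by
  classical
  set v := hwVec F L c Λ0 Λc with hv
  set N := Submodule.span (UniversalEnvelopingAlgebra F B) {u0} with hN
  have hbr : ⁅L α (idxSucc k), L β idxNeg1⁆ = (((k.1 : F) + 2) * (β : F)) • L (α + β) k := by
    rw [hrel.1, dif_pos (show (-1 : ℤ) ≤ (idxSucc k).1 + idxNeg1.1 by
      have := k.2; simp only [idxSucc, idxNeg1]; omega),
      if_neg (fun hc => hne hc.1), add_zero]
    congr 1
    · simp only [idxSucc, idxNeg1]
      push_cast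
      ring
    · exact congrArg _ (Subtype.ext (by simp only [idxSucc, idxNeg1]; omega))
  have e1 : (ι F ⁅L α (idxSucc k), L β idxNeg1⁆ : UniversalEnvelopingAlgebra F B) • v
      = (ι F (L α (idxSucc k)) : UniversalEnvelopingAlgebra F B) •
          ((ι F (L β idxNeg1) : UniversalEnvelopingAlgebra F B) • v)
        - (ι F (L β idxNeg1) : UniversalEnvelopingAlgebra F B) •
          ((ι F (L α (idxSucc k)) : UniversalEnvelopingAlgebra F B) • v) := by
    rw [LieHom.map_lie, Ring.lie_def, sub_smul, mul_smul, mul_smul]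
  have e2 : (ι F ⁅L α (idxSucc k), L β idxNeg1⁆ : UniversalEnvelopingAlgebra F B) • v
      = (((k.1 : F) + 2) * (β : F)) •
          ((ι F (L (α + β) k) : UniversalEnvelopingAlgebra F B) • v) := by
    rw [hbr, map_smul, smul_assoc]
  have hmem : (((k.1 : F) + 2) * (β : F)) •
      ((ι F (L (α + β) k) : UniversalEnvelopingAlgebra F B) • v) ∈ N := by
    rw [← e2, e1]
    exact Submodule.sub_mem _ h1 h2
  have hC : ((k.1 : F) + 2) * (β : F) ≠ 0 := by
    refine mul_ne_zero ?_ hβ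
    have hk := k.2
    have : ((k.1 + 2 : ℤ) : F) ≠ 0 := Int.cast_ne_zero.2 (by omega)
    push_cast at this
    exact this
  have := Submodule.smul_mem N
    (algebraMap F (UniversalEnvelopingAlgebra F B) (((k.1 : F) + 2) * (β : F))⁻¹) hmem
  rwa [algebraMap_smul, smul_smul, inv_mul_cancel₀ hC, one_smul] at this

end KeyStep

/-- Assume the order is dense, let `u₀` be a nonzero weight vector of `M(Λ,≻)`,
and suppose there is `ε ∈ G_+` with `L_{-ε,k} v_Λ ∈ U(B(G)) u₀` for all
`k ≥ -1`. Then for every `x` in the `ℤ_{≥0}`-span of `{y ∈ G_+ | y ≼ ε}`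
(i.e. every sum of positive elements `≼ ε`) and every `k ≥ -1`, one has
`L_{-x,k} v_Λ ∈ U(B(G)) u₀`. -/
theorem verma_step4 [LinearOrder G]
    (hord : ∀ x y z : G, x < y → x + z < y + z)
    (hdense : ∀ α : G, 0 < α → {β : G | 0 < β ∧ β < α}.Infinite)
    (L : G → BIdx → B) (c : B)
    (hrel : IsBlockAlgebra L c)
    (b : Module.Basis ((G × BIdx) ⊕ Unit) F B)
    (hbL : ∀ p : G × BIdx, b (Sum.inl p) = L p.1 p.2)
    (hbc : b (Sum.inr ()) = c)
    (Λ0 : BIdx → F) (Λc : F)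
    (u0 : VermaMod F L c Λ0 Λc) (hu0 : u0 ≠ 0)
    (lam : G) (hwt : u0 ∈ vermaWt F L c Λ0 Λc lam)
    (ε : G) (hε : 0 < ε)
    (h : ∀ k : BIdx, (ι F (L (-ε) k) : UniversalEnvelopingAlgebra F B) •
        hwVec F L c Λ0 Λc ∈ Submodule.span (UniversalEnvelopingAlgebra F B) {u0}) :
    ∀ x ∈ AddSubmonoid.closure {y : G | 0 < y ∧ y ≤ ε}, 0 < x →
      ∀ k : BIdx, (ι F (L (-x) k) : UniversalEnvelopingAlgebra F B) •
        hwVec F L c Λ0 Λc ∈ Submodule.span (UniversalEnvelopingAlgebra F B) {u0} := by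
  intro x hx
  set N := Submodule.span (UniversalEnvelopingAlgebra F B) {u0} with hN
  have base : ∀ y : G, 0 < y → y ≤ ε → ∀ k : BIdx,
      (ι F (L (-y) k) : UniversalEnvelopingAlgebra F B) • hwVec F L c Λ0 Λc ∈ N := by
    intro y hy hyε k
    rcases eq_or_lt_of_le hyε with rfl | hlt
    · exact h k
    · have hα : 0 < ε - y := by
        have := hord y ε (-y) hlt
        rwa [add_neg_cancel, ← sub_eq_add_neg] at this
      have hne : ε - y ≠ -(-ε) := by
        rw [neg_neg]
        intro hc
        exact (ne_of_gt hy) (by have := sub_eq_self.1 hc; exact this.symm ▸ rfl)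
      have hβ : ((-ε : G) : F) ≠ 0 := by
        rw [AddSubgroup.coe_neg, neg_ne_zero]
        exact fun hc => (ne_of_gt hε) (ZeroMemClass.coe_eq_zero.1 hc)
      have h2 : (ι F (L (-ε) idxNeg1) : UniversalEnvelopingAlgebra F B) •
          ((ι F (L (ε - y) (idxSucc k)) : UniversalEnvelopingAlgebra F B) •
            hwVec F L c Λ0 Λc) ∈ N := by
        rw [kill_pos L c Λ0 Λc (ε - y) hα (idxSucc k), smul_zero]
        exact zero_mem _
      have hk := key_step L c hrel Λ0 Λc u0 (ε - y) (-ε) hne hβ k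
        (Submodule.smul_mem _ _ (h idxNeg1)) h2
      have heq : ε - y + -ε = -y := by abel
      rwa [heq] at hk
  have main : ∀ x ∈ AddSubmonoid.closure {y : G | 0 < y ∧ y ≤ ε},
      0 ≤ x ∧ (0 < x → ∀ k : BIdx,
        (ι F (L (-x) k) : UniversalEnvelopingAlgebra F B) • hwVec F L c Λ0 Λc ∈ N) := by
    intro x hx
    induction hx using AddSubmonoid.closure_induction with
    | mem y hy => exact ⟨le_of_lt hy.1, fun _ k => base y hy.1 hy.2 k⟩
    | zero => exact ⟨le_refl 0, fun h0 => absurd h0 (lt_irrefl 0)⟩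
    | add a s _ _ iha ihs =>
      have hneg : ∀ t : G, 0 < t → -t < 0 := fun t ht => by
        have := hord 0 t (-t) ht
        rwa [zero_add, add_neg_cancel] at this
      constructor
      · rcases iha.1.eq_or_lt with h0 | h0
        · rw [← h0, zero_add]; exact ihs.1
        · have := hord 0 a s h0
          rw [zero_add] at this
          exact le_trans ihs.1 (le_of_lt this)
      · intro hpos k
        rcases iha.1.eq_or_lt with h0 | h0
        · rw [← h0, zero_add] at hpos ⊢
          exact ihs.2 hpos k
        · rcases ihs.1.eq_or_lt with h1 | h1
          · rw [← h1, add_zero] at hpos ⊢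
            exact iha.2 h0 k
          · have hne : (-a : G) ≠ -(-s) := by
              rw [neg_neg]
              exact ne_of_lt (lt_trans (hneg a h0) h1)
            have hβ : ((-s : G) : F) ≠ 0 := by
              rw [AddSubgroup.coe_neg, neg_ne_zero]
              exact fun hc => (ne_of_gt h1) (ZeroMemClass.coe_eq_zero.1 hc)
            have hk := key_step L c hrel Λ0 Λc u0 (-a) (-s) hne hβ k
              (Submodule.smul_mem _ _ (ihs.2 h1 idxNeg1))
              (Submodule.smul_mem _ _ (iha.2 h0 (idxSucc k)))
            rwa [← neg_add] at hk
  exact fun hx0 k => (main x hx).2 hx0 k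
end
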